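/- Let d be a positive integer and c a positive integer with Macaulay expansion c = Σ_{i=1}^{d} binom(i + ε_i, i) in base d, where ε_d ≥ ... ≥ ε_1 ≥ -1. Define c^{⟨d⟩} := Σ_{i=1}^{d} binom(i + ε_i + 1, i + 1). Then the map c ↦ c^{⟨d⟩} is (weakly) monotone increasing in c. -/
import Mathlib

open Finset

lemma sumA (m j : ℕ) :
    ∑ i ∈ Finset.range (j+1), Nat.choose (i+m) (i+1) < Nat.choose (j+1+m) (j+1) := by
  induction j with
  | zero => simp [Nat.choose_one_right]
  | succ j ih =>
    rw [Finset.sum_range_succ, show j+1+1+m = j+2+m by omega, show j+1+1 = j+2 by omega]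
    have pas : Nat.choose (j+2+m) (j+2) =
        Nat.choose (j+1+m) (j+1) + Nat.choose (j+1+m) (j+2) := by
      rw [show j+2+m = (j+1+m)+1 by omega, Nat.choose_succ_succ]
    omega

lemma sumB (m j : ℕ) :
    ∑ i ∈ Finset.range (j+1), Nat.choose (i+m) (i+2) ≤ Nat.choose (j+1+m) (j+2) := by
  induction j with
  | zero =>
    rw [show (1:ℕ)+m = m+1 by omega]
    simpa using Nat.choose_le_choose 2 (Nat.le_succ m)
  | succ j ih =>
    rw [Finset.sum_range_succ, show j+1+1+m = j+2+m by omega, show j+1+2 = j+3 by omega,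
      show j+1+1+1 = j+3 by omega]
    have pas : Nat.choose (j+2+m) (j+3) =
        Nat.choose (j+1+m) (j+2) + Nat.choose (j+1+m) (j+3) := by
      rw [show j+2+m = (j+1+m)+1 by omega, show j+3 = (j+2)+1 by omega, Nat.choose_succ_succ]
    omega

lemma split_sum (d j : ℕ) (hj : j < d) (f : ℕ → ℕ) :
    ∑ i ∈ range d, f i = ∑ i ∈ range (j+1), f i + ∑ i ∈ Ico (j+1) d, f i := by
  rw [range_eq_Ico, ← Finset.sum_Ico_consecutive _ (Nat.zero_le _) hj, ← range_eq_Ico]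

lemma keyT (d : ℕ) (n n' : ℕ → ℕ) (j : ℕ) (hj : j < d)
    (hmono : ∀ i, i ≤ j → n i ≤ n j)
    (heq : ∀ i, j < i → i < d → n i = n' i)
    (hlt : n j < n' j) :
    ∑ i ∈ range d, Nat.choose (i+1+n i) (i+2) ≤ ∑ i ∈ range d, Nat.choose (i+1+n' i) (i+2) := by
  rw [split_sum d j hj, split_sum d j hj]
  have htail : ∑ i ∈ Ico (j+1) d, Nat.choose (i+1+n i) (i+2)
      = ∑ i ∈ Ico (j+1) d, Nat.choose (i+1+n' i) (i+2) := by
    refine Finset.sum_congr rfl fun i hi => ?_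
    rw [mem_Ico] at hi
    rw [heq i (by omega) hi.2]
  have h1 : ∑ i ∈ range (j+1), Nat.choose (i+1+n i) (i+2)
      ≤ Nat.choose (j+1+n' j) (j+2) := by
    calc ∑ i ∈ range (j+1), Nat.choose (i+1+n i) (i+2)
        ≤ ∑ i ∈ range (j+1), Nat.choose (i + n' j) (i+2) := by
          refine Finset.sum_le_sum fun i hi => Nat.choose_le_choose _ ?_
          have : n i ≤ n j := hmono i (by rw [mem_range] at hi; omega)
          omega
      _ ≤ Nat.choose (j+1+n' j) (j+2) := sumB _ _
  have h2 : Nat.choose (j+1+n' j) (j+2)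
      ≤ ∑ i ∈ range (j+1), Nat.choose (i+1+n' i) (i+2) :=
    Finset.single_le_sum (f := fun i => Nat.choose (i+1+n' i) (i+2))
      (fun i _ => Nat.zero_le _) (self_mem_range_succ j)
  omega

lemma keyS (d : ℕ) (n n' : ℕ → ℕ) (j : ℕ) (hj : j < d)
    (hmono : ∀ i, i ≤ j → n i ≤ n j)
    (heq : ∀ i, j < i → i < d → n i = n' i)
    (hlt : n j < n' j) :
    ∑ i ∈ range d, Nat.choose (i + n i) (i+1) < ∑ i ∈ range d, Nat.choose (i + n' i) (i+1) := by
  rw [split_sum d j hj, split_sum d j hj]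
  have htail : ∑ i ∈ Ico (j+1) d, Nat.choose (i + n i) (i+1)
      = ∑ i ∈ Ico (j+1) d, Nat.choose (i + n' i) (i+1) := by
    refine Finset.sum_congr rfl fun i hi => ?_
    rw [mem_Ico] at hi
    rw [heq i (by omega) hi.2]
  have h1 : ∑ i ∈ range (j+1), Nat.choose (i + n i) (i+1)
      < Nat.choose (j + n' j) (j+1) := by
    calc ∑ i ∈ range (j+1), Nat.choose (i + n i) (i+1)
        ≤ ∑ i ∈ range (j+1), Nat.choose (i + (n' j - 1)) (i+1) := by
          refine Finset.sum_le_sum fun i hi => Nat.choose_le_choose _ ?_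
          have : n i ≤ n j := hmono i (by rw [mem_range] at hi; omega)
          omega
      _ < Nat.choose (j+1+(n' j - 1)) (j+1) := sumA _ _
      _ = Nat.choose (j + n' j) (j+1) := by rw [show j+1+(n' j -1) = j + n' j by omega]
  have h2 : Nat.choose (j + n' j) (j+1)
      ≤ ∑ i ∈ range (j+1), Nat.choose (i + n' i) (i+1) :=
    Finset.single_le_sum (f := fun i => Nat.choose (i + n' i) (i+1))
      (fun i _ => Nat.zero_le _) (self_mem_range_succ j)
  omega

lemma main_nat (d : ℕ) (n n' : ℕ → ℕ)
    (hm : ∀ i j, i ≤ j → j < d → n i ≤ n j)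
    (hm' : ∀ i j, i ≤ j → j < d → n' i ≤ n' j)
    (h : ∑ i ∈ range d, Nat.choose (i + n i) (i+1) ≤ ∑ i ∈ range d, Nat.choose (i + n' i) (i+1)) :
    ∑ i ∈ range d, Nat.choose (i+1+n i) (i+2) ≤ ∑ i ∈ range d, Nat.choose (i+1+n' i) (i+2) := by
  by_cases hall : ∀ i < d, n i = n' i
  · exact le_of_eq (Finset.sum_congr rfl fun i hi => by
      rw [mem_range] at hi; rw [hall i hi])
  · push_neg at hall
    set s : Finset ℕ := (range d).filter (fun i => n i ≠ n' i) with hs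
    have hne : s.Nonempty := by
      obtain ⟨i, hid, hine⟩ := hall
      exact ⟨i, by simp [hs, hid, hine]⟩
    set j := s.max' hne with hjdef
    have hjs : j ∈ s := s.max'_mem hne
    have hjd : j < d := by
      have := (mem_filter.1 hjs).1; rwa [mem_range] at this
    have hjne : n j ≠ n' j := (mem_filter.1 hjs).2
    have heq : ∀ i, j < i → i < d → n i = n' i := by
      intro i hji hid
      by_contra hc
      have : i ∈ s := by simp [hs, mem_filter, mem_range, hid, hc]
      exact absurd (s.le_max' i this) (by omega)
    rcases Nat.lt_or_ge (n j) (n' j) with hlt | hge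
    · exact keyT d n n' j hjd (fun i hi => hm i j hi hjd) heq hlt
    · have hlt' : n' j < n j := by omega
      have := keyS d n' n j hjd (fun i hi => hm' i j hi hjd)
        (fun i h1 h2 => (heq i h1 h2).symm) hlt'
      omega



/-- Monotonicity of `c ↦ c^⟨d⟩`: if `c ≤ c'` and both have Macaulay expansions in
base `d` given by `ε` and `ε'` (index `i : Fin d` corresponds to classical index
`i + 1`), then `c^⟨d⟩ = ∑ binom(i + ε_i + 1, i + 1) ≤ c'^⟨d⟩`. -/
theorem macaulay_shift_monotone (d : ℕ) (hd : 0 < d) (c c' : ℕ)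
    (hc : 0 < c) (hc' : 0 < c') (hcc' : c ≤ c')
    (ε ε' : Fin d → ℤ)
    (hmono : ∀ i j : Fin d, i ≤ j → ε i ≤ ε j)
    (hlb : ∀ i : Fin d, -1 ≤ ε i)
    (hsum : (c : ℤ) = ∑ i : Fin d,
      ((((i : ℕ) + 1 : ℤ) + ε i).toNat.choose ((i : ℕ) + 1) : ℤ))
    (hmono' : ∀ i j : Fin d, i ≤ j → ε' i ≤ ε' j)
    (hlb' : ∀ i : Fin d, -1 ≤ ε' i)
    (hsum' : (c' : ℤ) = ∑ i : Fin d,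
      ((((i : ℕ) + 1 : ℤ) + ε' i).toNat.choose ((i : ℕ) + 1) : ℤ)) :
    (∑ i : Fin d, (((i : ℕ) + 1 : ℤ) + ε i + 1).toNat.choose ((i : ℕ) + 2)) ≤
      ∑ i : Fin d, (((i : ℕ) + 1 : ℤ) + ε' i + 1).toNat.choose ((i : ℕ) + 2) := by
    classical
  set n : ℕ → ℕ := fun i => if h : i < d then (ε ⟨i, h⟩ + 1).toNat else 0 with hn
  set n' : ℕ → ℕ := fun i => if h : i < d then (ε' ⟨i, h⟩ + 1).toNat else 0 with hn'
  have hcast : ∀ i : Fin d, (n i : ℤ) = ε i + 1 := by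
    intro i
    simp only [hn, i.isLt, dif_pos, Fin.eta]
    rw [Int.toNat_of_nonneg (by have := hlb i; omega)]
  have hcast' : ∀ i : Fin d, (n' i : ℤ) = ε' i + 1 := by
    intro i
    simp only [hn', i.isLt, dif_pos, Fin.eta]
    rw [Int.toNat_of_nonneg (by have := hlb' i; omega)]
  -- rewrite the sums
  have hterm : ∀ i : Fin d, (((i : ℕ) + 1 : ℤ) + ε i).toNat = (i : ℕ) + n i := by
    intro i; have := hcast i; omega
  have hterm' : ∀ i : Fin d, (((i : ℕ) + 1 : ℤ) + ε' i).toNat = (i : ℕ) + n' i := by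
    intro i; have := hcast' i; omega
  have hterm2 : ∀ i : Fin d, (((i : ℕ) + 1 : ℤ) + ε i + 1).toNat = (i : ℕ) + 1 + n i := by
    intro i; have := hcast i; omega
  have hterm2' : ∀ i : Fin d, (((i : ℕ) + 1 : ℤ) + ε' i + 1).toNat = (i : ℕ) + 1 + n' i := by
    intro i; have := hcast' i; omega
  have hc1 : c = ∑ i ∈ Finset.range d, Nat.choose (i + n i) (i+1) := by
    have : (c : ℤ) = ((∑ i ∈ Finset.range d, Nat.choose (i + n i) (i+1) : ℕ) : ℤ) := by
      rw [hsum]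
      push_cast
      rw [← Fin.sum_univ_eq_sum_range (fun i => (Nat.choose (i + n i) (i+1) : ℤ)) d]
      exact Finset.sum_congr rfl fun i _ => by rw [hterm i]
    exact_mod_cast this
  have hc1' : c' = ∑ i ∈ Finset.range d, Nat.choose (i + n' i) (i+1) := by
    have : (c' : ℤ) = ((∑ i ∈ Finset.range d, Nat.choose (i + n' i) (i+1) : ℕ) : ℤ) := by
      rw [hsum']
      push_cast
      rw [← Fin.sum_univ_eq_sum_range (fun i => (Nat.choose (i + n' i) (i+1) : ℤ)) d]
      exact Finset.sum_congr rfl fun i _ => by rw [hterm' i]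
    exact_mod_cast this
  have hgoal : (∑ i : Fin d, (((i : ℕ) + 1 : ℤ) + ε i + 1).toNat.choose ((i : ℕ) + 2))
      = ∑ i ∈ Finset.range d, Nat.choose (i+1+n i) (i+2) := by
    rw [← Fin.sum_univ_eq_sum_range (fun i => Nat.choose (i+1+n i) (i+2)) d]
    exact Finset.sum_congr rfl fun i _ => by rw [hterm2 i]
  have hgoal' : (∑ i : Fin d, (((i : ℕ) + 1 : ℤ) + ε' i + 1).toNat.choose ((i : ℕ) + 2))
      = ∑ i ∈ Finset.range d, Nat.choose (i+1+n' i) (i+2) := by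
    rw [← Fin.sum_univ_eq_sum_range (fun i => Nat.choose (i+1+n' i) (i+2)) d]
    exact Finset.sum_congr rfl fun i _ => by rw [hterm2' i]
  rw [hgoal, hgoal']
  apply main_nat d n n'
  · intro i j hij hjd
    have hid : i < d := lt_of_le_of_lt hij hjd
    have := hmono ⟨i, hid⟩ ⟨j, hjd⟩ hij
    have h1 := hcast ⟨i, hid⟩
    have h2 := hcast ⟨j, hjd⟩
    simp only at h1 h2
    omega
  · intro i j hij hjd
    have hid : i < d := lt_of_le_of_lt hij hjd
    have := hmono' ⟨i, hid⟩ ⟨j, hjd⟩ hij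
    have h1 := hcast' ⟨i, hid⟩
    have h2 := hcast' ⟨j, hjd⟩
    simp only at h1 h2
    omega
  · rw [← hc1, ← hc1']
    exact hcc'
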